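/- There exists a qutrit stabilizer state σ on ℂ³ such that (3 − √3)·σ − |H₊⟩⟨H₊| is positive semidefinite, where |H₊⟩ = ((1+√3)|0⟩ + |1⟩ + |2⟩)/√(2(3+√3)) is the H₊ state. Explicitly, σ = (1/2)(|v₀⟩⟨v₀| + |v₁⟩⟨v₁|) with |v₀⟩ = |0⟩ and |v₁⟩ = (|0⟩ + |1⟩ + |2⟩)/√3 has this property, and each |v_j⟩ is a pure stabilizer state. -/

import Mathlib

/-!
The Fourier matrix `F j k = χ (j * k) / √d` is a Clifford unitary in every dimension: it
conjugates the Weyl monomial `Z^a X^b` to `χ (a * b) • Z^b X^(-a)`, and all Heisenberg–Weyl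
phases are unimodular. Hence `|0⟩` and `F |0⟩ = (|0⟩ + |1⟩ + |2⟩)/√3` are pure stabilizer states.

For the witness, `12 σ = |u⟩⟨u| + |w⟩⟨w|` with `u = (1 + √3, 1, 1)` proportional to `|H₊⟩` and
`w = (√3 - 1, -1, -1)` orthogonal to `u`. As `‖u‖² = 2 (3 + √3) = 12 / (3 - √3)`, subtracting
`|H₊⟩⟨H₊|` from `(3 - √3) σ` leaves `((3 - √3) / 12) |w⟩⟨w| ⪰ 0`.
-/

open Matrix Complex BigOperators
open scoped ComplexOrder

noncomputable section

namespace Magic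

/-- ω = exp(2πi/d) -/
def omegaC (d : ℕ) : ℂ := Complex.exp (2 * Real.pi * Complex.I / d)

/-- τ = exp((d+1)πi/d) -/
def tauC (d : ℕ) : ℂ := Complex.exp ((d + 1) * Real.pi * Complex.I / d)

/-- Shift operator X|j⟩ = |j⊕1⟩. -/
def shiftX (d : ℕ) [NeZero d] : Matrix (ZMod d) (ZMod d) ℂ :=
  Matrix.of fun r c => if r = c + 1 then 1 else 0

/-- Boost operator Z|j⟩ = ω^j |j⟩. -/
def boostZ (d : ℕ) [NeZero d] : Matrix (ZMod d) (ZMod d) ℂ :=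
  Matrix.diagonal fun j => omegaC d ^ j.val

/-- Heisenberg–Weyl operator T_u = τ^{-a₁a₂} Z^{a₁} X^{a₂}. -/
def HW (d : ℕ) [NeZero d] (u : ZMod d × ZMod d) : Matrix (ZMod d) (ZMod d) ℂ :=
  tauC d ^ (-((u.1.val * u.2.val : ℕ) : ℤ)) • (boostZ d ^ u.1.val * shiftX d ^ u.2.val)

/-- A₀ = (1/d) ∑_u T_u. -/
def A0 (d : ℕ) [NeZero d] : Matrix (ZMod d) (ZMod d) ℂ :=
  (d : ℂ)⁻¹ • ∑ u : ZMod d × ZMod d, HW d u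

/-- Phase-space point operators A_u = T_u A₀ T_u†. -/
def Apt (d : ℕ) [NeZero d] (u : ZMod d × ZMod d) : Matrix (ZMod d) (ZMod d) ℂ :=
  HW d u * A0 d * (HW d u)ᴴ

/-- Discrete Wigner function W_V(u) = tr(A_u V)/d. -/
def wig (d : ℕ) [NeZero d] (V : Matrix (ZMod d) (ZMod d) ℂ) (u : ZMod d × ZMod d) : ℂ :=
  (Apt d u * V).trace / d

/-- Wigner trace norm ‖V‖_{W,1} = ∑_u |W_V(u)|. -/
def wnorm1 (d : ℕ) [NeZero d] (V : Matrix (ZMod d) (ZMod d) ℂ) : ℝ :=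
  ∑ u : ZMod d × ZMod d, ‖wig d V u‖

/-- Wigner spectral norm ‖V‖_{W,∞} = d · max_u |W_V(u)|. -/
def wnormInf (d : ℕ) [NeZero d] (V : Matrix (ZMod d) (ZMod d) ℂ) : ℝ :=
  (d : ℝ) * ⨆ u : ZMod d × ZMod d, ‖wig d V u‖

end Magic

namespace Magic

/-- The Strange state |S⟩ = (|1⟩ - |2⟩)/√2. -/
def strange : ZMod 3 → ℂ :=
  fun j => if j = 1 then ((Real.sqrt 2)⁻¹ : ℝ)
    else if j = 2 then (-(Real.sqrt 2)⁻¹ : ℝ) else 0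

/-- The Norrell state |N⟩ = (-|0⟩ + 2|1⟩ - |2⟩)/√6. -/
def norrell : ZMod 3 → ℂ :=
  fun j => if j = 1 then ((2 / Real.sqrt 6 : ℝ) : ℂ) else ((-(Real.sqrt 6)⁻¹ : ℝ) : ℂ)

/-- The H₊ state |H₊⟩ = ((1+√3)|0⟩ + |1⟩ + |2⟩)/√(2(3+√3)). -/
def hplus : ZMod 3 → ℂ :=
  fun j => if j = 0 then (((1 + Real.sqrt 3) / Real.sqrt (2 * (3 + Real.sqrt 3)) : ℝ) : ℂ)
    else (((Real.sqrt (2 * (3 + Real.sqrt 3)))⁻¹ : ℝ) : ℂ)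

/-- ξ = exp(2πi/9). -/
def xi : ℂ := Complex.exp (2 * Real.pi * Complex.I / 9)

/-- The T state |T⟩ = (ξ|0⟩ + |1⟩ + ξ⁻¹|2⟩)/√3. -/
def tket : ZMod 3 → ℂ :=
  fun j => (if j = 0 then xi else if j = 1 then 1 else xi⁻¹) / ((Real.sqrt 3 : ℝ) : ℂ)

/-- The rank-one projector |ψ⟩⟨ψ|. -/
def projOf (ψ : ZMod 3 → ℂ) : Matrix (ZMod 3) (ZMod 3) ℂ :=
  Matrix.vecMulVec ψ (star ψ)

end Magic

namespace Magic

/-- A single-qudit Clifford unitary: a unitary mapping Heisenberg–Weyl operators to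
Heisenberg–Weyl operators up to phases under conjugation. -/
def IsClifford1 (d : ℕ) [NeZero d] (U : Matrix (ZMod d) (ZMod d) ℂ) : Prop :=
  Uᴴ * U = 1 ∧ U * Uᴴ = 1 ∧
  ∀ u : ZMod d × ZMod d, ∃ (θ : ℝ) (u' : ZMod d × ZMod d),
    U * HW d u * Uᴴ = Complex.exp (θ * Complex.I) • HW d u'

/-- The vector |0⟩. -/
def ket0 (d : ℕ) [NeZero d] : ZMod d → ℂ := fun j => if j = 0 then 1 else 0

/-- A pure stabilizer state vector: U|0⟩ for a Clifford unitary U. -/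
def IsPureStabVec (d : ℕ) [NeZero d] (ψ : ZMod d → ℂ) : Prop :=
  ∃ U : Matrix (ZMod d) (ZMod d) ℂ, IsClifford1 d U ∧ ψ = U.mulVec (ket0 d)

/-- A single-qudit stabilizer state: a convex combination of pure stabilizer states. -/
def IsStabState1 (d : ℕ) [NeZero d] (σ : Matrix (ZMod d) (ZMod d) ℂ) : Prop :=
  ∃ (m : ℕ) (p : Fin m → ℝ) (ψ : Fin m → ZMod d → ℂ),
    (∀ j, 0 ≤ p j) ∧ (∑ j, p j = 1) ∧ (∀ j, IsPureStabVec d (ψ j)) ∧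
    σ = ∑ j, (p j : ℂ) • Matrix.vecMulVec (ψ j) (star (ψ j))

end Magic

namespace Magic

/-- |v₀⟩ = |0⟩. -/
def v0vec : ZMod 3 → ℂ := fun j => if j = 0 then 1 else 0

/-- |v₁⟩ = (|0⟩ + |1⟩ + |2⟩)/√3. -/
def v1vec : ZMod 3 → ℂ := fun _ => (((Real.sqrt 3)⁻¹ : ℝ) : ℂ)

/-- σ = (1/2)(|v₀⟩⟨v₀| + |v₁⟩⟨v₁|). -/
def hplusSigma : Matrix (ZMod 3) (ZMod 3) ℂ :=
  (2 : ℂ)⁻¹ • (Matrix.vecMulVec v0vec (star v0vec) + Matrix.vecMulVec v1vec (star v1vec))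

section Clifford

variable {d : ℕ} [NeZero d]

local notation "χ" => ZMod.stdAddChar (N := d)

lemma omegaC_pow_eq_stdAddChar (n : ℕ) : omegaC d ^ n = χ n := by
  rw [omegaC, ← Complex.exp_nat_mul, ZMod.stdAddChar_apply, ZMod.toCircle_natCast]
  ring_nf

omit [NeZero d] in
lemma norm_tauC : ‖tauC d‖ = 1 := by
  rw [tauC, Complex.norm_exp]
  simp

def weyl (a b : ZMod d) : Matrix (ZMod d) (ZMod d) ℂ :=
  Matrix.of fun r c => if r = c + b then χ (a * r) else 0

lemma shiftX_pow_apply (n : ℕ) (r c : ZMod d) :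
    (shiftX d ^ n) r c = if r = c + n then 1 else 0 := by
  induction n generalizing c with
  | zero => simp [Matrix.one_apply]
  | succ n ih =>
    rw [pow_succ, Matrix.mul_apply]
    simp_rw [ih]
    simp [shiftX, add_assoc, add_comm (1 : ZMod d)]

lemma boostZ_pow (n : ℕ) : boostZ d ^ n = Matrix.diagonal fun j => χ (n * j) := by
  rw [boostZ, Matrix.diagonal_pow]
  congr 1
  ext j
  rw [Pi.pow_apply, omegaC_pow_eq_stdAddChar, ← AddChar.map_nsmul_eq_pow, nsmul_eq_mul,
    ZMod.natCast_zmod_val]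

lemma boostZ_pow_mul_shiftX_pow (a b : ZMod d) :
    boostZ d ^ a.val * shiftX d ^ b.val = weyl a b := by
  ext r c
  simp [boostZ_pow, weyl, Matrix.diagonal_mul, shiftX_pow_apply]

lemma HW_eq_smul_weyl (u : ZMod d × ZMod d) :
    HW d u = tauC d ^ (-((u.1.val * u.2.val : ℕ) : ℤ)) • weyl u.1 u.2 := by
  rw [HW, boostZ_pow_mul_shiftX_pow]

def fourier : Matrix (ZMod d) (ZMod d) ℂ :=
  (Real.sqrt d : ℂ)⁻¹ • Matrix.of fun j k => χ (j * k)

lemma fourier_mul_conjTranspose : fourier * fourierᴴ = (1 : Matrix (ZMod d) (ZMod d) ℂ) := by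
  ext j l
  have hd : (Real.sqrt d : ℂ)⁻¹ * (Real.sqrt d : ℂ)⁻¹ * d = 1 := by
    rw [← mul_inv, ← Complex.ofReal_mul, Real.mul_self_sqrt (Nat.cast_nonneg d)]
    exact inv_mul_cancel₀ (by exact_mod_cast NeZero.ne d)
  calc (fourier * fourierᴴ : Matrix (ZMod d) (ZMod d) ℂ) j l
      = (Real.sqrt d : ℂ)⁻¹ * (Real.sqrt d : ℂ)⁻¹ * ∑ k, χ (k * (j - l)) := by
        simp only [fourier, Matrix.mul_apply, Matrix.conjTranspose_apply, Matrix.smul_apply,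
          Matrix.of_apply, star_smul, Finset.mul_sum]
        refine Finset.sum_congr rfl fun k _ => ?_
        have hχ : χ (j * k) * χ (-(l * k)) = χ (k * (j - l)) := by
          rw [← AddChar.map_add_eq_mul]
          ring_nf
        simp only [Complex.star_def, ← AddChar.map_neg_eq_conj, map_inv₀, Complex.conj_ofReal,
          smul_eq_mul]
        linear_combination (Real.sqrt d : ℂ)⁻¹ * (Real.sqrt d : ℂ)⁻¹ * hχ
    _ = (1 : Matrix (ZMod d) (ZMod d) ℂ) j l := by
        simp only [AddChar.sum_mulShift _ (ZMod.isPrimitive_stdAddChar d), Matrix.one_apply,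
          sub_eq_zero, ZMod.card]
        split_ifs <;> simp [hd]

lemma fourier_mul_weyl (a b : ZMod d) :
    fourier * weyl a b = χ (a * b) • (weyl b (-a) * fourier) := by
  ext j c
  have hχ : χ (j * (c + b)) * χ (a * (c + b)) = χ (a * b) * χ (b * j) * χ ((j + a) * c) := by
    simp only [← AddChar.map_add_eq_mul]
    ring_nf
  simp only [fourier, weyl, smul_of, Matrix.mul_apply, of_apply, Pi.smul_apply, smul_eq_mul,
    mul_ite, ite_mul, mul_zero, zero_mul, Finset.sum_ite_eq', Finset.sum_ite_eq, Finset.mem_univ,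
    if_true, eq_add_neg_iff_add_eq, Matrix.smul_apply]
  linear_combination (Real.sqrt d : ℂ)⁻¹ * hχ

lemma fourier_conj_weyl (a b : ZMod d) :
    fourier * weyl a b * fourierᴴ = χ (a * b) • weyl b (-a) := by
  rw [fourier_mul_weyl, Matrix.smul_mul, Matrix.mul_assoc, fourier_mul_conjTranspose,
    Matrix.mul_one]

lemma exists_fourier_conj_HW (u : ZMod d × ZMod d) :
    ∃ θ : ℝ, fourier * HW d u * fourierᴴ = Complex.exp (θ * Complex.I) • HW d (u.2, -u.1) := by
  set m : ℤ := -((u.1.val * u.2.val : ℕ) : ℤ)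
  set m' : ℤ := -((u.2.val * (-u.1).val : ℕ) : ℤ)
  have hτ : tauC d ^ m' ≠ 0 := by
    rw [← norm_ne_zero_iff, norm_zpow, norm_tauC, _root_.one_zpow]
    exact one_ne_zero
  obtain ⟨θ, hθ⟩ := (Complex.norm_eq_one_iff (tauC d ^ m * χ (u.1 * u.2) / tauC d ^ m')).1 (by
    simp [norm_zpow, norm_tauC, AddChar.norm_apply])
  refine ⟨θ, ?_⟩
  rw [hθ, HW_eq_smul_weyl, HW_eq_smul_weyl, Matrix.mul_smul, Matrix.smul_mul, fourier_conj_weyl,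
    smul_smul, smul_smul, div_mul_cancel₀ _ hτ]

theorem isClifford1_fourier : IsClifford1 d fourier :=
  ⟨mul_eq_one_comm.1 fourier_mul_conjTranspose, fourier_mul_conjTranspose, fun u =>
    let ⟨θ, h⟩ := exists_fourier_conj_HW u; ⟨θ, _, h⟩⟩

lemma isClifford1_one : IsClifford1 d 1 :=
  ⟨by simp, by simp, fun u => ⟨0, u, by simp⟩⟩

lemma isPureStabVec_ket0 : IsPureStabVec d (ket0 d) :=
  ⟨1, isClifford1_one, (Matrix.one_mulVec _).symm⟩

lemma isPureStabVec_const : IsPureStabVec d fun _ => (Real.sqrt d : ℂ)⁻¹ := by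
  refine ⟨fourier, isClifford1_fourier, ?_⟩
  ext j
  simp [fourier, ket0, Matrix.mulVec, dotProduct]

lemma isStabState1_convex_pair {ψ φ : ZMod d → ℂ} {p : ℝ} (hp₀ : 0 ≤ p) (hp₁ : p ≤ 1)
    (hψ : IsPureStabVec d ψ) (hφ : IsPureStabVec d φ) :
    IsStabState1 d ((p : ℂ) • vecMulVec ψ (star ψ) + ((1 - p : ℝ) : ℂ) • vecMulVec φ (star φ)) := by
  refine ⟨2, ![p, 1 - p], ![ψ, φ], fun j => ?_, by simp, fun j => ?_, ?_⟩
  · fin_cases j <;> simpa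
  · fin_cases j <;> assumption
  · simp [Fin.sum_univ_two, -Complex.ofReal_sub]

end Clifford

lemma isPureStabVec_v0vec : IsPureStabVec 3 v0vec := isPureStabVec_ket0

lemma isPureStabVec_v1vec : IsPureStabVec 3 v1vec := by
  convert isPureStabVec_const (d := 3) using 2
  simp [v1vec]

lemma isStabState1_hplusSigma : IsStabState1 3 hplusSigma := by
  convert isStabState1_convex_pair (p := 1 / 2) (by norm_num) (by norm_num)
    isPureStabVec_v0vec isPureStabVec_v1vec using 1
  rw [hplusSigma, smul_add]
  norm_num

def hplusRay : ZMod 3 → ℂ := fun j => if j = 0 then 1 + (Real.sqrt 3 : ℂ) else 1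

def hplusPerp : ZMod 3 → ℂ := fun j => if j = 0 then (Real.sqrt 3 : ℂ) - 1 else -1

lemma sq_ofReal_sqrt_three : (Real.sqrt 3 : ℂ) ^ 2 = 3 := by
  rw [← Complex.ofReal_pow, Real.sq_sqrt (by norm_num)]
  norm_num

lemma projOf_hplus :
    projOf hplus = ((3 - Real.sqrt 3) / 12 : ℝ) • vecMulVec hplusRay (star hplusRay) := by
  have hq : (Real.sqrt (2 * (3 + Real.sqrt 3)) : ℂ) ^ 2 = 2 * (3 + Real.sqrt 3) := by
    rw [← Complex.ofReal_pow, Real.sq_sqrt (by positivity)]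
    push_cast
    ring
  have hq₀ : (Real.sqrt (2 * (3 + Real.sqrt 3)) : ℂ) ≠ 0 := by
    rw [Complex.ofReal_ne_zero, Real.sqrt_ne_zero']
    positivity
  ext i j
  simp only [projOf, hplus, hplusRay, vecMulVec_apply, Matrix.smul_apply, Pi.star_apply]
  split_ifs
  all_goals
    simp only [Complex.star_def, map_add, map_one, Complex.conj_ofReal, Complex.real_smul]
    push_cast
    field_simp
    rw [hq]
    linear_combination 2 * sq_ofReal_sqrt_three

lemma twelve_smul_hplusSigma : (12 : ℂ) • hplusSigma =
    vecMulVec hplusRay (star hplusRay) + vecMulVec hplusPerp (star hplusPerp) := by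
  have hv : (Real.sqrt 3 : ℂ)⁻¹ * (Real.sqrt 3 : ℂ)⁻¹ = 3⁻¹ := by
    rw [← mul_inv, ← sq, sq_ofReal_sqrt_three]
  ext i j
  simp only [hplusSigma, hplusRay, hplusPerp, v0vec, v1vec, vecMulVec_apply, Matrix.smul_apply,
    Matrix.add_apply, Pi.star_apply, Complex.ofReal_inv, star_inv₀, Complex.star_def,
    Complex.conj_ofReal, hv]
  split_ifs
  · simp only [map_add, map_sub, map_one, Complex.conj_ofReal, smul_eq_mul]
    linear_combination -2 * sq_ofReal_sqrt_three
  all_goals norm_num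

lemma smul_hplusSigma_sub_projOf_hplus :
    ((3 - Real.sqrt 3 : ℝ) : ℂ) • hplusSigma - projOf hplus
      = ((3 - Real.sqrt 3) / 12 : ℝ) • vecMulVec hplusPerp (star hplusPerp) := by
  have h : ((3 - Real.sqrt 3 : ℝ) : ℂ) • hplusSigma
      = ((3 - Real.sqrt 3) / 12 : ℝ) • ((12 : ℂ) • hplusSigma) := by
    rw [← smul_assoc, Complex.real_smul]
    congr 1
    push_cast
    ring
  rw [h, twelve_smul_hplusSigma, projOf_hplus, smul_add, add_sub_cancel_left]

lemma posSemidef_smul_hplusSigma_sub_projOf_hplus :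
    (((3 - Real.sqrt 3 : ℝ) : ℂ) • hplusSigma - projOf hplus).PosSemidef := by
  rw [smul_hplusSigma_sub_projOf_hplus]
  refine (posSemidef_vecMulVec_self_star hplusPerp).smul ?_
  have : Real.sqrt 3 ≤ 3 := Real.sqrt_le_iff.2 ⟨by norm_num, by norm_num⟩
  linarith

/-- There is a qutrit stabilizer state σ with (3-√3)σ - |H₊⟩⟨H₊| ⪰ 0;
explicitly, σ = (1/2)(|v₀⟩⟨v₀| + |v₁⟩⟨v₁|) works, and each |v_j⟩ is a pure stabilizer
state. -/
theorem hplus_stab_witness :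
    IsPureStabVec 3 v0vec ∧ IsPureStabVec 3 v1vec ∧
    IsStabState1 3 hplusSigma ∧
    ((((3 - Real.sqrt 3 : ℝ) : ℂ) • hplusSigma - projOf hplus).PosSemidef) ∧
    ∃ σ : Matrix (ZMod 3) (ZMod 3) ℂ, IsStabState1 3 σ ∧
      ((((3 - Real.sqrt 3 : ℝ) : ℂ) • σ - projOf hplus).PosSemidef) :=
  ⟨isPureStabVec_v0vec, isPureStabVec_v1vec, isStabState1_hplusSigma,
    posSemidef_smul_hplusSigma_sub_projOf_hplus, hplusSigma, isStabState1_hplusSigma,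
    posSemidef_smul_hplusSigma_sub_projOf_hplus⟩

end Magic
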